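/- The sunflower graph Sf_n has harmonious chromatic number n + 1 for all n ≥ 7. -/
import Mathlib


/-- A coloring `c` is harmonious for `G` if it is a proper vertex coloring and
every unordered pair of colors appears on the endpoints of at most one edge. -/
def IsHarmonious {V α : Type*} (G : SimpleGraph V) (c : V → α) : Prop :=
  (∀ ⦃u v : V⦄, G.Adj u v → c u ≠ c v) ∧
  ∀ e ∈ G.edgeSet, ∀ e' ∈ G.edgeSet, Sym2.map c e = Sym2.map c e' → e = e'

/-- The harmonious chromatic number: the least `k` such that `G` admits a
harmonious coloring with `k` colors. -/
noncomputable def harmoniousChromaticNumber {V : Type*} [Fintype V] (G : SimpleGraph V) : ℕ :=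
  sInf {k | ∃ c : V → Fin k, IsHarmonious G c}


/-- The sunflower graph `Sf_n`: a wheel with hub `none` and cycle vertices
`some (inl i)` (`v_{i+1}` is `some (inl i)`), together with outer vertices
`some (inr i)`, where `u_i` is adjacent to `v_i` and `v_{i+1}` (indices mod `n`). -/
def sunflowerGraph (n : ℕ) : SimpleGraph (Option (Fin n ⊕ Fin n)) :=
  SimpleGraph.fromRel (fun x y =>
    match x, y with
    | none, some (.inl _) => True
    | some (.inl i), some (.inl j) => j.val = (i.val + 1) % n
    | some (.inr i), some (.inl j) => j = i ∨ j.val = (i.val + 1) % n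
    | _, _ => False)

/-- Rotation by `k` on `Fin n`. -/
def rot (k : ℕ) {n : ℕ} (i : Fin n) : Fin n := ⟨(i.val + k) % n, Nat.mod_lt _ i.pos⟩

lemma exists_mod (i k n : ℕ) (hi : i < n) (hk : k ≤ n) :
    ∃ q, (i + k) % n = q ∧ ((q = i + k ∧ i + k < n) ∨ (q + n = i + k ∧ n ≤ i + k)) := by
  rcases lt_or_ge (i + k) n with h | h
  · exact ⟨i + k, Nat.mod_eq_of_lt h, Or.inl ⟨rfl, h⟩⟩
  · refine ⟨i + k - n, ?_, Or.inr ⟨by omega, h⟩⟩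
    rw [Nat.mod_eq_sub_mod h, Nat.mod_eq_of_lt (by omega)]

/-- The explicit harmonious coloring: hub gets `0`, cycle vertex `i` gets `i+1`,
outer vertex `i` gets `(i+3) % n + 1`. -/
def sfColor (n : ℕ) : Option (Fin n ⊕ Fin n) → Fin (n + 1)
  | none => ⟨0, Nat.succ_pos n⟩
  | some (.inl i) => ⟨i.val + 1, by have := i.isLt; omega⟩
  | some (.inr i) => ⟨(i.val + 3) % n + 1, by have := Nat.mod_lt (i.val + 3) i.pos; omega⟩

lemma edge_cases {n : ℕ} {x y : Option (Fin n ⊕ Fin n)} (h : (sunflowerGraph n).Adj x y) :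
    (∃ i : Fin n, s(x, y) = s(none, some (.inl i))) ∨
    (∃ i : Fin n, s(x, y) = s(some (.inl i), some (.inl (rot 1 i)))) ∨
    (∃ i : Fin n, s(x, y) = s(some (.inr i), some (.inl i))) ∨
    (∃ i : Fin n, s(x, y) = s(some (.inr i), some (.inl (rot 1 i)))) := by
  simp only [sunflowerGraph, SimpleGraph.fromRel_adj] at h
  obtain ⟨hne, h⟩ := h
  rcases x with _ | (i | i) <;> rcases y with _ | (j | j)
  · exact absurd rfl hne
  · exact Or.inl ⟨j, rfl⟩
  · rcases h with h | h <;> exact h.elim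
  · exact Or.inl ⟨i, Sym2.eq_swap⟩
  · rcases h with h | h
    · refine Or.inr (Or.inl ⟨i, ?_⟩)
      have hj : j = rot 1 i := Fin.ext h
      rw [hj]
    · refine Or.inr (Or.inl ⟨j, ?_⟩)
      have hi : i = rot 1 j := Fin.ext h
      rw [hi, Sym2.eq_swap]
  · rcases h with h | (h | h)
    · exact h.elim
    · exact Or.inr (Or.inr (Or.inl ⟨j, by rw [h]; exact Sym2.eq_swap⟩))
    · refine Or.inr (Or.inr (Or.inr ⟨j, ?_⟩))
      have hi : i = rot 1 j := Fin.ext h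
      rw [hi, Sym2.eq_swap]
  · rcases h with h | h <;> exact h.elim
  · rcases h with (h | h) | h
    · exact Or.inr (Or.inr (Or.inl ⟨i, by rw [h]⟩))
    · refine Or.inr (Or.inr (Or.inr ⟨i, ?_⟩))
      have hj : j = rot 1 i := Fin.ext h
      rw [hj]
    · exact h.elim
  · rcases h with h | h <;> exact h.elim

lemma harmonious_sfColor {n : ℕ} (hn : 7 ≤ n) :
    IsHarmonious (sunflowerGraph n) (sfColor n) := by
  constructor
  · intro u v huv
    have hc := edge_cases huv
    rcases hc with ⟨i, h⟩ | ⟨i, h⟩ | ⟨i, h⟩ | ⟨i, h⟩ <;>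
    · rw [Sym2.eq_iff] at h
      obtain ⟨q1, e1, d1⟩ := exists_mod i.val 1 n i.isLt (by omega)
      obtain ⟨q3, e3, d3⟩ := exists_mod i.val 3 n i.isLt (by omega)
      rcases h with ⟨hu, hv⟩ | ⟨hu, hv⟩ <;> subst hu <;> subst hv <;>
        simp only [sfColor, rot, ne_eq, Fin.mk.injEq, e1, e3] <;> omega
  · intro e he e' he'
    induction e using Sym2.ind with | _ x y =>
    induction e' using Sym2.ind with | _ x' y' =>
    rw [SimpleGraph.mem_edgeSet] at he he'
    intro hmap
    rcases edge_cases he with ⟨i, hi⟩ | ⟨i, hi⟩ | ⟨i, hi⟩ | ⟨i, hi⟩ <;>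
      rcases edge_cases he' with ⟨j, hj⟩ | ⟨j, hj⟩ | ⟨j, hj⟩ | ⟨j, hj⟩ <;>
      rw [hi, hj] at hmap ⊢ <;>
      simp only [Sym2.map_pair_eq, Sym2.eq_iff, sfColor, rot, Fin.mk.injEq] at hmap <;>
      · obtain ⟨q1, e1, d1⟩ := exists_mod i.val 1 n i.isLt (by omega)
        obtain ⟨q3, e3, d3⟩ := exists_mod i.val 3 n i.isLt (by omega)
        obtain ⟨r1, f1, g1⟩ := exists_mod j.val 1 n j.isLt (by omega)
        obtain ⟨r3, f3, g3⟩ := exists_mod j.val 3 n j.isLt (by omega)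
        first | simp only [e1, e3, f1, f3] at hmap | skip
        first
          | (exfalso; omega)
          | (have hij : i = j := Fin.ext (by omega); rw [hij])

lemma sunflower_lower {n k : ℕ} (hn : 1 ≤ n) (c : Option (Fin n ⊕ Fin n) → Fin k)
    (hc : IsHarmonious (sunflowerGraph n) c) : n + 1 ≤ k := by
  obtain ⟨hp, hd⟩ := hc
  have hadj : ∀ i : Fin n, (sunflowerGraph n).Adj none (some (.inl i)) := by
    intro i
    simp only [sunflowerGraph, SimpleGraph.fromRel_adj]
    exact ⟨by simp, Or.inl trivial⟩
  have hinj : Function.Injective (fun o : Option (Fin n) => c (o.map Sum.inl)) := by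
    intro a b hab
    match a, b with
    | none, none => rfl
    | none, some j => exact absurd hab (hp (hadj j))
    | some i, none => exact absurd hab.symm (hp (hadj i))
    | some i, some j =>
      have h1 : s(none, some (Sum.inl i)) ∈ (sunflowerGraph n).edgeSet := hadj i
      have h2 : s(none, some (Sum.inl j)) ∈ (sunflowerGraph n).edgeSet := hadj j
      have hmap : Sym2.map c s(none, some (Sum.inl i)) =
          Sym2.map c s(none, some (Sum.inl j)) := by
        rw [Sym2.map_pair_eq, Sym2.map_pair_eq]
        have : c (some (Sum.inl i)) = c (some (Sum.inl j)) := hab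
        rw [this]
      have := hd _ h1 _ h2 hmap
      rw [Sym2.eq_iff] at this
      rcases this with ⟨-, h⟩ | ⟨h, -⟩ <;> simp_all
  have hcard := Fintype.card_le_of_injective _ hinj
  simpa using hcard

theorem harmonious_sunflower (n : ℕ) (hn : 7 ≤ n) :
    harmoniousChromaticNumber (sunflowerGraph n) = n + 1 := by
  have hmem : (n + 1) ∈ {k | ∃ c : Option (Fin n ⊕ Fin n) → Fin k,
      IsHarmonious (sunflowerGraph n) c} := ⟨sfColor n, harmonious_sfColor hn⟩
  rw [harmoniousChromaticNumber]
  apply le_antisymm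
  · exact Nat.sInf_le hmem
  · refine le_csInf ⟨_, hmem⟩ ?_
    rintro k ⟨c, hc⟩
    exact sunflower_lower (by omega) c hc
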